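/- Let D ⊆ ℂ be a domain, let m ∈ ℕ, let 𝓡 be a family of rational functions of degree at most m (restricted to D), and let 𝓖 be a family of meromorphic functions on D. Let a₁, a₂, a₃ ∈ ℂ∞ be three distinct values. If 𝓖 is normal in D and for each R ∈ 𝓡 there exists g ∈ 𝓖 such that R and g share aⱼ partially in D for j = 1, 2, 3, then 𝓡 is normal in D. -/

import Mathlib

open Filter Topology OnePoint

/-- The point of the Riemann sphere `ℂ∞ = ℂ ∪ {∞}` viewed in `ℂ` (with `∞ ↦ 0` as junk value). -/
noncomputable def toC (x : OnePoint ℂ) : ℂ := Option.elim x 0 id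

/-- The spherical (chordal) metric on the Riemann sphere `ℂ∞`. -/
noncomputable def sphDist (x y : OnePoint ℂ) : ℝ :=
  Option.elim x
    (Option.elim y 0 (fun w => 2 / Real.sqrt (1 + ‖w‖ ^ 2)))
    (fun z => Option.elim y (2 / Real.sqrt (1 + ‖z‖ ^ 2))
      (fun w => 2 * ‖z - w‖ /
        (Real.sqrt (1 + ‖z‖ ^ 2) * Real.sqrt (1 + ‖w‖ ^ 2))))

/-- `f : ℂ → ℂ∞` is meromorphic on `D`: near each point of `D` it is either (the coercion of)
an analytic function, or the reciprocal of an analytic function (with poles sent to `∞`),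
and it is not locally identically `∞`. -/
def SphMeromorphicOn (f : ℂ → OnePoint ℂ) (D : Set ℂ) : Prop :=
  ∀ z ∈ D, ∃ g : ℂ → ℂ, AnalyticAt ℂ g z ∧ ¬ (∀ᶠ w in nhds z, g w = 0) ∧
    ((∀ᶠ w in nhds z, f w = (g w : OnePoint ℂ)) ∨
     (∀ᶠ w in nhds z, f w = if g w = 0 then (∞ : OnePoint ℂ) else (((g w)⁻¹ : ℂ) : OnePoint ℂ)))

/-- Spherically locally uniform convergence of a sequence of sphere-valued maps on `U`. -/
def SphConvLocUnifOn (F : ℕ → ℂ → OnePoint ℂ) (g : ℂ → OnePoint ℂ) (U : Set ℂ) : Prop :=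
  ∀ K : Set ℂ, K ⊆ U → IsCompact K → ∀ ε : ℝ, 0 < ε →
    ∀ᶠ n in atTop, ∀ z ∈ K, sphDist (F n z) (g z) < ε

/-- A family of sphere-valued maps is normal on `U` if every sequence from the family has a
subsequence converging spherically locally uniformly on `U`. -/
def NormalOn (F : Set (ℂ → OnePoint ℂ)) (U : Set ℂ) : Prop :=
  ∀ s : ℕ → ℂ → OnePoint ℂ, (∀ n, s n ∈ F) →
    ∃ φ : ℕ → ℕ, StrictMono φ ∧ ∃ g : ℂ → OnePoint ℂ, SphConvLocUnifOn (s ∘ φ) g U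

/-- `g` is a limit function of the family `G` on `U`. -/
def IsLimitFunctionOf (g : ℂ → OnePoint ℂ) (G : Set (ℂ → OnePoint ℂ)) (U : Set ℂ) : Prop :=
  ∃ s : ℕ → ℂ → OnePoint ℂ, (∀ n, s n ∈ G) ∧ SphConvLocUnifOn s g U

/-- `f` and `g` share the value `a` partially on `D`: `Ē(f,a) ⊆ Ē(g,a)`. -/
def SharesPartially (f g : ℂ → OnePoint ℂ) (D : Set ℂ) (a : OnePoint ℂ) : Prop :=
  ∀ z ∈ D, f z = a → g z = a

/-- Every `a`-point of `f` in `D` has multiplicity at least `m` (poles when `a = ∞`). -/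
def SphValueMultAtLeast (f : ℂ → OnePoint ℂ) (D : Set ℂ) (a : OnePoint ℂ) (m : ℕ) : Prop :=
  ∀ z ∈ D, f z = a →
    (a = (∞ : OnePoint ℂ) →
      ∀ h : MeromorphicAt (fun w => toC (f w)) z, meromorphicOrderAt (fun w => toC (f w)) z ≤ ((-(m : ℤ) : ℤ) : WithTop ℤ)) ∧
    (∀ b : ℂ, a = (b : OnePoint ℂ) →
      ∀ h : MeromorphicAt (fun w => toC (f w) - b) z, ((m : ℤ) : WithTop ℤ) ≤ meromorphicOrderAt (fun w => toC (f w) - b) z)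

/-- The `k`-th derivative of a sphere-valued meromorphic map (`∞` at the poles). -/
noncomputable def sphDeriv (k : ℕ) (f : ℂ → OnePoint ℂ) : ℂ → OnePoint ℂ :=
  fun z => Option.elim (f z) (∞ : OnePoint ℂ)
    (fun _ => ((iteratedDeriv k (fun w => toC (f w)) z : ℂ) : OnePoint ℂ))

/-- Scalar multiplication on the Riemann sphere (fixing `∞`). -/
noncomputable def sphSmul (c : ℂ) (x : OnePoint ℂ) : OnePoint ℂ :=
  Option.elim x (∞ : OnePoint ℂ) (fun w => ((c * w : ℂ) : OnePoint ℂ))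

open scoped Classical in
/-- The order of `f` at `z` in the sense of meromorphic functions (junk value `0` if `f` is not
meromorphic at `z`). Positive = zero of that order, negative = pole of that order. -/
noncomputable def meroOrderAt (f : ℂ → ℂ) (z : ℂ) : WithTop ℤ :=
  if h : MeromorphicAt f z then meromorphicOrderAt f z else 0

/-- The multiplicity of `z` as a pole of the sphere-valued map `f` (0 if not a pole). -/
noncomputable def poleMult (f : ℂ → OnePoint ℂ) (z : ℂ) : ℕ :=
  (-((meroOrderAt (fun w => toC (f w)) z).untopD 0)).toNat

/-- The Nevanlinna pole-counting number `n(t, f)`: the number of poles of `f` in the closed disc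
of radius `t`, counted with multiplicity. -/
noncomputable def poleCountingNum (f : ℂ → OnePoint ℂ) (t : ℝ) : ℕ :=
  ∑ᶠ z ∈ Metric.closedBall (0 : ℂ) t, poleMult f z

/-- The Nevanlinna proximity function `m(r, f) = (1/2π) ∫₀^{2π} log⁺ |f(r e^{iθ})| dθ`. -/
noncomputable def proximityFn (f : ℂ → OnePoint ℂ) (r : ℝ) : ℝ :=
  (1 / (2 * Real.pi)) * ∫ θ in (0:ℝ)..(2 * Real.pi),
    max 0 (Real.log ‖toC (f ((r : ℂ) * Complex.exp ((θ : ℂ) * Complex.I)))‖)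

/-- The integrated counting function `N(r, f) = ∫₀^r (n(t,f) - n(0,f))/t dt + n(0,f) log r`. -/
noncomputable def integratedCounting (f : ℂ → OnePoint ℂ) (r : ℝ) : ℝ :=
  (∫ t in (0:ℝ)..r, ((poleCountingNum f t : ℝ) - (poleCountingNum f 0 : ℝ)) / t)
    + (poleCountingNum f 0 : ℝ) * Real.log r

/-- The Nevanlinna characteristic `T(r, f) = m(r, f) + N(r, f)`. -/
noncomputable def nevanlinnaT (f : ℂ → OnePoint ℂ) (r : ℝ) : ℝ :=
  proximityFn f r + integratedCounting f r

/-- `f` has finite (Nevanlinna growth) order: `limsup_{r→∞} log T(r,f) / log r < ∞`. -/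
def HasFiniteOrder (f : ℂ → OnePoint ℂ) : Prop :=
  ∃ ρ : ℝ, ∀ᶠ r in atTop, Real.log (nevanlinnaT f r) / Real.log r ≤ ρ

/-- `f : ℂ → ℂ∞` is a rational map: the quotient of two coprime polynomials, with the zeros
of the denominator sent to `∞`. -/
def IsRationalSphereMap (f : ℂ → OnePoint ℂ) : Prop :=
  ∃ P Q : Polynomial ℂ, Q ≠ 0 ∧ IsCoprime P Q ∧
    ∀ z : ℂ, f z = if Q.eval z = 0 then (∞ : OnePoint ℂ)
                   else ((P.eval z / Q.eval z : ℂ) : OnePoint ℂ)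

/-- A rational map `ℂ → ℂ∞` of degree at most `m`. -/
def IsRationalDegLE (f : ℂ → OnePoint ℂ) (m : ℕ) : Prop :=
  ∃ P Q : Polynomial ℂ, Q ≠ 0 ∧ IsCoprime P Q ∧ P.natDegree ≤ m ∧ Q.natDegree ≤ m ∧
    ∀ z : ℂ, f z = if Q.eval z = 0 then (∞ : OnePoint ℂ)
                   else ((P.eval z / Q.eval z : ℂ) : OnePoint ℂ)

/-!
Write each rational map of degree `≤ m` as `[P : Q]` with coprime `P`, `Q`, and normalise the pair
of coefficient vectors to norm one. Along a subsequence these vectors converge to some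
`(P₀, Q₀) ≠ 0`. Where `P₀` and `Q₀` have no common zero, the chordal distance from `[P : Q]` to
`[P₀ : Q₀]` is at most `4 ‖(P, Q) - (P₀, Q₀)‖ / ‖(P₀, Q₀)‖`, so the maps converge spherically to
`P₀ / Q₀`. A common zero `z₀ ∈ D` is impossible: for every value `b` but at most one, `P₀ - b Q₀`
(`Q₀` if `b = ∞`) is a nonzero polynomial vanishing at `z₀`, so by Hurwitz's theorem the rational
maps take the value `b` arbitrarily close to `z₀`. Their partners in `𝓖` then do too, and a limit
function of the partners, continuous at `z₀`, would take two of the values `aⱼ` there.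
-/

open Metric

@[simp] lemma sphDist_infty_infty : sphDist ∞ ∞ = 0 := rfl
@[simp] lemma sphDist_coe_infty (z : ℂ) : sphDist z ∞ = 2 / √(1 + ‖z‖ ^ 2) := rfl
@[simp] lemma sphDist_infty_coe (w : ℂ) : sphDist ∞ w = 2 / √(1 + ‖w‖ ^ 2) := rfl
@[simp] lemma sphDist_coe_coe (z w : ℂ) :
    sphDist z w = 2 * ‖z - w‖ / (√(1 + ‖z‖ ^ 2) * √(1 + ‖w‖ ^ 2)) := rfl

-- Inverse stereographic projection onto the unit sphere of `ℂ × ℝ`.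
noncomputable def sphereEmbed (x : OnePoint ℂ) : WithLp 2 (ℂ × ℝ) :=
  WithLp.toLp 2 <| x.elim (0, 1) fun z =>
    (((2 / (1 + ‖z‖ ^ 2) : ℝ) : ℂ) * z, (‖z‖ ^ 2 - 1) / (1 + ‖z‖ ^ 2))

lemma dist_sphereEmbed_coe_coe (z w : ℂ) :
    dist (sphereEmbed z) (sphereEmbed w) =
      2 * ‖z - w‖ / (√(1 + ‖z‖ ^ 2) * √(1 + ‖w‖ ^ 2)) := by
  have hz : 0 < 1 + ‖z‖ ^ 2 := by positivity
  have hw : 0 < 1 + ‖w‖ ^ 2 := by positivity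
  rw [WithLp.prod_dist_eq_of_L2, ← Real.sqrt_mul hz.le, div_eq_mul_inv, ← Real.sqrt_inv,
    show 2 * ‖z - w‖ = √((2 * ‖z - w‖) ^ 2) by rw [Real.sqrt_sq (by positivity)],
    ← Real.sqrt_mul (by positivity)]
  congr 1
  simp only [sphereEmbed, OnePoint.elim, Option.elim, WithLp.toLp_fst, WithLp.toLp_snd,
    Complex.dist_eq, Real.dist_eq, sq_abs, mul_pow]
  simp only [Complex.sq_norm, Complex.normSq_apply, Complex.sub_re, Complex.sub_im,
    Complex.re_ofReal_mul, Complex.im_ofReal_mul] at *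
  field_simp
  ring

lemma dist_sphereEmbed_coe_infty (z : ℂ) :
    dist (sphereEmbed z) (sphereEmbed ∞) = 2 / √(1 + ‖z‖ ^ 2) := by
  have hz : 0 < 1 + ‖z‖ ^ 2 := by positivity
  rw [WithLp.prod_dist_eq_of_L2, div_eq_mul_inv, ← Real.sqrt_inv,
    show (2 : ℝ) = √(2 ^ 2) by rw [Real.sqrt_sq (by positivity)], ← Real.sqrt_mul (by positivity)]
  congr 1
  simp only [sphereEmbed, OnePoint.elim, Option.elim, WithLp.toLp_fst, WithLp.toLp_snd,
    Complex.dist_eq, Real.dist_eq, sq_abs]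
  simp only [Complex.sq_norm, Complex.normSq_apply, Complex.sub_re, Complex.sub_im,
    Complex.re_ofReal_mul, Complex.im_ofReal_mul, Complex.zero_re, Complex.zero_im] at *
  field_simp
  ring

lemma sphDist_eq_dist (x y : OnePoint ℂ) : sphDist x y = dist (sphereEmbed x) (sphereEmbed y) := by
  cases x <;> cases y <;>
    simp [dist_sphereEmbed_coe_coe, dist_sphereEmbed_coe_infty, dist_comm (sphereEmbed ∞)]

lemma eq_of_sphDist_eq_zero {x y : OnePoint ℂ} (hxy : sphDist x y = 0) : x = y := by
  have h : ∀ z : ℂ, 0 < 1 + ‖z‖ ^ 2 := fun z => by positivity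
  cases x <;> cases y <;> simp [sub_eq_zero, (h _).ne', (h _).le] at hxy ⊢
  exact hxy

lemma sphereEmbed_injective : Function.Injective sphereEmbed :=
  fun _ _ h => eq_of_sphDist_eq_zero (by rw [sphDist_eq_dist, h, dist_self])

-- The point `[x.1 : x.2]` of the projective line; the junk value at `(0, 0)` is `∞`.
noncomputable def projPoint (x : ℂ × ℂ) : OnePoint ℂ := if x.2 = 0 then ∞ else ↑(x.1 / x.2)

lemma sqrt_one_add_norm_div_sq (p : ℂ) {q : ℂ} (hq : q ≠ 0) :
    √(1 + ‖p / q‖ ^ 2) = √(‖p‖ ^ 2 + ‖q‖ ^ 2) / ‖q‖ := by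
  have hq' : 0 < ‖q‖ := norm_pos_iff.2 hq
  rw [← Real.sqrt_sq hq'.le, ← Real.sqrt_div' _ (by positivity), Real.sqrt_sq hq'.le, norm_div]
  congr 1
  field_simp
  ring

lemma sphDist_projPoint {x y : ℂ × ℂ} (hx : x ≠ 0) (hy : y ≠ 0) :
    sphDist (projPoint x) (projPoint y) = 2 * ‖x.1 * y.2 - x.2 * y.1‖ /
      (√(‖x.1‖ ^ 2 + ‖x.2‖ ^ 2) * √(‖y.1‖ ^ 2 + ‖y.2‖ ^ 2)) := by
  obtain ⟨p, q⟩ := x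
  obtain ⟨A, B⟩ := y
  have hp : q = 0 → p ≠ 0 := fun hq hp => hx (by simp [hp, hq])
  have hA : B = 0 → A ≠ 0 := fun hB hA => hy (by simp [hA, hB])
  by_cases hq : q = 0 <;> by_cases hB : B = 0
  · simp [projPoint, hq, hB]
  · have hp' : 0 < ‖p‖ := norm_pos_iff.2 (hp hq)
    simp only [projPoint, hq, hB, if_true, if_false, sphDist_infty_coe,
      sqrt_one_add_norm_div_sq A hB, zero_mul, sub_zero, norm_mul, norm_zero,
      zero_pow two_ne_zero, add_zero, Real.sqrt_sq (norm_nonneg _)]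
    field_simp
  · have hA' : 0 < ‖A‖ := norm_pos_iff.2 (hA hB)
    simp only [projPoint, hq, hB, if_true, if_false, sphDist_coe_infty,
      sqrt_one_add_norm_div_sq p hq, mul_zero, zero_sub, norm_neg, norm_mul, norm_zero,
      zero_pow two_ne_zero, add_zero, Real.sqrt_sq (norm_nonneg _)]
    field_simp
  · simp only [projPoint, hq, hB, if_false, sphDist_coe_coe, sqrt_one_add_norm_div_sq p hq,
      sqrt_one_add_norm_div_sq A hB]
    rw [div_sub_div _ _ hq hB, norm_div, norm_mul]
    have : 0 < ‖q‖ := norm_pos_iff.2 hq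
    have : 0 < ‖B‖ := norm_pos_iff.2 hB
    field_simp

lemma norm_le_sqrt_norm_sq_add_norm_sq (x : ℂ × ℂ) : ‖x‖ ≤ √(‖x.1‖ ^ 2 + ‖x.2‖ ^ 2) := by
  rw [Prod.norm_def]
  refine max_le ?_ ?_ <;> refine Real.le_sqrt_of_sq_le ?_ <;>
    nlinarith [sq_nonneg ‖x.1‖, sq_nonneg ‖x.2‖]

lemma sphDist_infty_le_two (x : OnePoint ℂ) : sphDist ∞ x ≤ 2 := by
  cases x with
  | infty => simp
  | coe w =>
    rw [sphDist_infty_coe]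
    exact div_le_self zero_le_two (Real.one_le_sqrt.2 (by nlinarith [sq_nonneg ‖w‖]))

lemma sphDist_projPoint_le (x : ℂ × ℂ) {y : ℂ × ℂ} (hy : y ≠ 0) :
    sphDist (projPoint x) (projPoint y) ≤ 4 * ‖x - y‖ / ‖y‖ := by
  have hy' : 0 < ‖y‖ := norm_pos_iff.2 hy
  by_cases hx : x = 0
  · have : projPoint x = ∞ := by simp [projPoint, hx]
    rw [this, hx, zero_sub, norm_neg, mul_div_assoc, div_self hy'.ne']
    linarith [sphDist_infty_le_two (projPoint y)]
  have hx' : 0 < ‖x‖ := norm_pos_iff.2 hx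
  have hcross : ‖x.1 * y.2 - x.2 * y.1‖ ≤ 2 * ‖x‖ * ‖x - y‖ := by
    have h1 : ‖x.1‖ ≤ ‖x‖ := norm_fst_le x
    have h2 : ‖x.2‖ ≤ ‖x‖ := norm_snd_le x
    have h3 : ‖y.1 - x.1‖ ≤ ‖x - y‖ := by rw [norm_sub_rev]; exact norm_fst_le (x - y)
    have h4 : ‖y.2 - x.2‖ ≤ ‖x - y‖ := by rw [norm_sub_rev]; exact norm_snd_le (x - y)
    calc ‖x.1 * y.2 - x.2 * y.1‖ = ‖x.1 * (y.2 - x.2) - x.2 * (y.1 - x.1)‖ := by congr 1; ring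
      _ ≤ ‖x.1‖ * ‖y.2 - x.2‖ + ‖x.2‖ * ‖y.1 - x.1‖ := by
        rw [← norm_mul, ← norm_mul]; exact norm_sub_le _ _
      _ ≤ 2 * ‖x‖ * ‖x - y‖ := by nlinarith [norm_nonneg (y.2 - x.2), norm_nonneg (y.1 - x.1)]
  calc sphDist (projPoint x) (projPoint y)
      ≤ 2 * (2 * ‖x‖ * ‖x - y‖) / (‖x‖ * ‖y‖) := by
        rw [sphDist_projPoint hx hy]
        gcongr
        exacts [norm_le_sqrt_norm_sq_add_norm_sq x, norm_le_sqrt_norm_sq_add_norm_sq y]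
    _ = 4 * ‖x - y‖ / ‖y‖ := by field_simp; ring

lemma projPoint_smul {c : ℂ} (hc : c ≠ 0) (x : ℂ × ℂ) : projPoint (c • x) = projPoint x := by
  simp [projPoint, hc, mul_div_mul_left]

lemma continuousAt_sphereEmbed_projPoint {y : ℂ × ℂ} (hy : y ≠ 0) :
    ContinuousAt (sphereEmbed ∘ projPoint) y := by
  rw [ContinuousAt, tendsto_iff_dist_tendsto_zero]
  have hlim : Tendsto (fun x => 4 * ‖x - y‖ / ‖y‖) (𝓝 y) (𝓝 0) := by
    have : Continuous fun x : ℂ × ℂ => 4 * ‖x - y‖ / ‖y‖ := by fun_prop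
    simpa using this.tendsto y
  refine squeeze_zero (fun _ => dist_nonneg) (fun x => ?_) hlim
  rw [Function.comp_apply, Function.comp_apply, ← sphDist_eq_dist]
  exact sphDist_projPoint_le x hy

lemma SphMeromorphicOn.continuousOn_sphereEmbed {f : ℂ → OnePoint ℂ} {D : Set ℂ}
    (hf : SphMeromorphicOn f D) : ContinuousOn (sphereEmbed ∘ f) D := by
  intro z hz
  obtain ⟨h, hh, -, hloc⟩ := hf z hz
  obtain ⟨k, hk, hk0, hfk⟩ : ∃ k : ℂ → ℂ × ℂ,
      ContinuousAt k z ∧ k z ≠ 0 ∧ f =ᶠ[𝓝 z] projPoint ∘ k := by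
    rcases hloc with hloc | hloc
    · exact ⟨fun w => (h w, 1), hh.continuousAt.prodMk continuousAt_const, by simp,
        hloc.mono fun w hw => by simp [hw, projPoint]⟩
    · exact ⟨fun w => (1, h w), continuousAt_const.prodMk hh.continuousAt, by simp,
        hloc.mono fun w hw => by simp [hw, projPoint]⟩
  exact ((continuousAt_sphereEmbed_projPoint hk0).comp hk).congr
    (hfk.fun_comp sphereEmbed).symm |>.continuousWithinAt

lemma SphConvLocUnifOn.tendstoUniformlyOn {F : ℕ → ℂ → OnePoint ℂ} {g : ℂ → OnePoint ℂ}
    {U K : Set ℂ} (h : SphConvLocUnifOn F g U) (hKU : K ⊆ U) (hK : IsCompact K) :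
    TendstoUniformlyOn (fun n => sphereEmbed ∘ F n) (sphereEmbed ∘ g) atTop K := by
  refine Metric.tendstoUniformlyOn_iff.2 fun ε hε => ?_
  filter_upwards [h K hKU hK ε hε] with n hn z hz
  rw [dist_comm]
  simpa [sphDist_eq_dist] using hn z hz

lemma eq_of_tendstoUniformlyOn_of_frequently_eq {ι X Y : Type*} [TopologicalSpace X]
    [MetricSpace Y] {p : Filter ι} {F : ι → X → Y} {f : X → Y} {K : Set X} {x : X} {y : Y}
    (hF : TendstoUniformlyOn F f p K) (hK : K ∈ 𝓝 x) (hf : ContinuousAt f x)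
    (hy : ∀ U ∈ 𝓝 x, ∃ᶠ n in p, ∃ w ∈ U, F n w = y) : f x = y := by
  refine eq_of_forall_dist_le fun ε hε => ?_
  have hU : f ⁻¹' ball (f x) (ε / 2) ∩ K ∈ 𝓝 x :=
    inter_mem (hf (ball_mem_nhds _ (half_pos hε))) hK
  obtain ⟨n, ⟨w, ⟨hwf, hwK⟩, rfl⟩, hn⟩ :=
    ((hy _ hU).and_eventually (Metric.tendstoUniformlyOn_iff.1 hF _ (half_pos hε))).exists
  have h1 : dist (f w) (f x) < ε / 2 := hwf
  have h2 : dist (f w) (F n w) < ε / 2 := hn w hwK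
  linarith [dist_triangle_left (f x) (F n w) (f w)]

lemma SphConvLocUnifOn.eq_of_frequently_eq {F : ℕ → ℂ → OnePoint ℂ} {g : ℂ → OnePoint ℂ}
    {D : Set ℂ} {z₀ : ℂ} {b : OnePoint ℂ} (hFg : SphConvLocUnifOn F g D) (hD : IsOpen D)
    (hF : ∀ n, SphMeromorphicOn (F n) D) (hz₀ : z₀ ∈ D)
    (hb : ∀ U ∈ 𝓝 z₀, ∃ᶠ n in atTop, ∃ w ∈ U, F n w = b) : g z₀ = b := by
  obtain ⟨r, hr, hrD⟩ := nhds_basis_closedBall.mem_iff.1 (hD.mem_nhds hz₀)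
  have hK : closedBall z₀ r ∈ 𝓝 z₀ := closedBall_mem_nhds z₀ hr
  have hunif := hFg.tendstoUniformlyOn hrD (isCompact_closedBall z₀ r)
  have hcont : ContinuousOn (sphereEmbed ∘ g) (closedBall z₀ r) :=
    hunif.continuousOn (Frequently.of_forall fun n => (hF n).continuousOn_sphereEmbed.mono hrD)
  refine sphereEmbed_injective (eq_of_tendstoUniformlyOn_of_frequently_eq (x := z₀) hunif hK
    (hcont.continuousAt hK) fun U hU => (hb U hU).mono ?_)
  rintro n ⟨w, hw, hFw⟩
  exact ⟨w, hw, by simp [hFw]⟩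

lemma sphConvLocUnifOn_projPoint_comp {x : ℕ → ℂ → ℂ × ℂ} {y : ℂ → ℂ × ℂ} {U : Set ℂ}
    (hxy : ∀ K ⊆ U, IsCompact K → TendstoUniformlyOn x y atTop K) (hy : ContinuousOn y U)
    (hy0 : ∀ z ∈ U, y z ≠ 0) :
    SphConvLocUnifOn (fun n => projPoint ∘ x n) (projPoint ∘ y) U := by
  intro K hKU hK ε hε
  obtain rfl | hKne := K.eq_empty_or_nonempty
  · simp
  obtain ⟨z₁, hz₁, hmin⟩ := hK.exists_isMinOn hKne (hy.mono hKU).norm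
  have hc : 0 < ‖y z₁‖ := norm_pos_iff.2 (hy0 z₁ (hKU hz₁))
  filter_upwards [Metric.tendstoUniformlyOn_iff.1 (hxy K hKU hK) (ε * ‖y z₁‖ / 4) (by positivity)]
    with n hn z hz
  have hz' : ‖y z₁‖ ≤ ‖y z‖ := hmin hz
  have hxz : ‖x n z - y z‖ < ε * ‖y z₁‖ / 4 := by rw [← dist_eq_norm, dist_comm]; exact hn z hz
  calc sphDist (projPoint (x n z)) (projPoint (y z))
      ≤ 4 * ‖x n z - y z‖ / ‖y z‖ := sphDist_projPoint_le _ (hy0 z (hKU hz))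
    _ ≤ 4 * ‖x n z - y z‖ / ‖y z₁‖ := by gcongr
    _ < 4 * (ε * ‖y z₁‖ / 4) / ‖y z₁‖ := by gcongr
    _ = ε := by field_simp

lemma tendstoUniformlyOn_of_continuous_uncurry {A X Y : Type*} [TopologicalSpace A]
    [TopologicalSpace X] [UniformSpace Y] {f : A → X → Y} (hf : Continuous f.uncurry)
    {K : Set X} (hK : IsCompact K) {ι : Type*} {p : Filter ι} {a : ι → A} {a₀ : A}
    (ha : Tendsto a p (𝓝 a₀)) : TendstoUniformlyOn (fun n => f (a n)) (f a₀) p K := by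
  intro s hs
  obtain ⟨t, ht, hts⟩ := hK.mem_uniformity_of_prod hf.continuousOn (Set.mem_univ a₀)
    (UniformSpace.symm hs)
  rw [nhdsWithin_univ] at ht
  filter_upwards [ha ht] with n hn x hx using hts _ hn x hx

-- Maximum modulus principle applied to `1 / f`.
lemma exists_mem_closedBall_eq_zero_of_norm_lt {f : ℂ → ℂ} {z₀ : ℂ} {r a : ℝ} (hr : 0 < r)
    (hf : DifferentiableOn ℂ f (closedBall z₀ r)) (hz₀ : ‖f z₀‖ < a)
    (hsphere : ∀ w ∈ sphere z₀ r, a ≤ ‖f w‖) : ∃ w ∈ closedBall z₀ r, f w = 0 := by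
  by_contra! hne
  have hf₀ : 0 < ‖f z₀‖ := norm_pos_iff.2 (hne z₀ (mem_closedBall_self hr.le))
  have hmax := Complex.norm_le_of_forall_mem_frontier_norm_le isBounded_ball
    ((hf.inv hne).diffContOnCl_ball subset_rfl) (C := a⁻¹) (fun w hw => ?_)
    (subset_closure (mem_ball_self hr))
  · rw [Pi.inv_apply, norm_inv, inv_le_inv₀ hf₀ (hf₀.trans hz₀)] at hmax
    exact hmax.not_gt hz₀
  · rw [frontier_ball z₀ hr.ne'] at hw
    rw [Pi.inv_apply, norm_inv]
    exact inv_anti₀ (hf₀.trans hz₀) (hsphere w hw)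

-- A weak form of Hurwitz's theorem.
lemma eventually_exists_eq_zero_of_tendstoUniformlyOn {F : ℕ → ℂ → ℂ} {f : ℂ → ℂ} {z₀ : ℂ}
    {r : ℝ} (hr : 0 < r) (hF : ∀ n, DifferentiableOn ℂ (F n) (closedBall z₀ r))
    (hFf : TendstoUniformlyOn F f atTop (closedBall z₀ r)) (hf : ContinuousOn f (sphere z₀ r))
    (hf₀ : f z₀ = 0) (hfne : ∀ w ∈ sphere z₀ r, f w ≠ 0) :
    ∀ᶠ n in atTop, ∃ w ∈ closedBall z₀ r, F n w = 0 := by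
  obtain ⟨w₁, hw₁, hmin⟩ := (isCompact_sphere z₀ r).exists_isMinOn
    (NormedSpace.sphere_nonempty.2 hr.le) hf.norm
  have hc : 0 < ‖f w₁‖ := norm_pos_iff.2 (hfne w₁ hw₁)
  filter_upwards [Metric.tendstoUniformlyOn_iff.1 hFf _ (half_pos hc)] with n hn
  refine exists_mem_closedBall_eq_zero_of_norm_lt hr (hF n) (a := ‖f w₁‖ / 2) ?_ fun w hw => ?_
  · simpa [hf₀] using hn z₀ (mem_closedBall_self hr.le)
  · have h1 : ‖f w₁‖ ≤ ‖f w‖ := hmin hw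
    have h2 : ‖f w - F n w‖ < ‖f w₁‖ / 2 := by
      rw [← dist_eq_norm]; exact hn w (sphere_subset_closedBall hw)
    linarith [norm_sub_norm_le (f w) (F n w)]

section CoeffVectors

variable {k : ℕ}

def evalCoeffs (a : Fin k → ℂ) (z : ℂ) : ℂ := ∑ i, a i * z ^ (i : ℕ)

def evalCoeffPair (u : (Fin k → ℂ) × (Fin k → ℂ)) (z : ℂ) : ℂ × ℂ :=
  (evalCoeffs u.1 z, evalCoeffs u.2 z)

lemma Polynomial.eval_eq_evalCoeffs {P : Polynomial ℂ} (hP : P.natDegree < k) (z : ℂ) :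
    P.eval z = evalCoeffs (fun i : Fin k => P.coeff i) z := by
  rw [Polynomial.eval_eq_sum_range' hP, evalCoeffs,
    Fin.sum_univ_eq_sum_range (fun i => P.coeff i * z ^ i)]

lemma continuous_evalCoeffs : Continuous fun p : (Fin k → ℂ) × ℂ => evalCoeffs p.1 p.2 := by
  unfold evalCoeffs; fun_prop

lemma differentiable_evalCoeffs (a : Fin k → ℂ) : Differentiable ℂ (evalCoeffs a) := by
  unfold evalCoeffs; fun_prop

lemma evalCoeffPair_smul (c : ℂ) (u : (Fin k → ℂ) × (Fin k → ℂ)) (z : ℂ) :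
    evalCoeffPair (c • u) z = c • evalCoeffPair u z := by
  simp [evalCoeffPair, evalCoeffs, Finset.mul_sum, mul_assoc]

lemma eq_zero_of_forall_evalCoeffs_eq_zero {a : Fin k → ℂ} (h : ∀ z, evalCoeffs a z = 0) :
    a = 0 := by
  set p := (Polynomial.degreeLTEquiv ℂ k).symm a
  have hp : p = 0 := Subtype.ext <| Polynomial.funext fun z => by
    rw [Submodule.coe_zero, Polynomial.eval_zero, ← h z]
    simp [p, Polynomial.degreeLTEquiv, Polynomial.eval_finsetSum, evalCoeffs]
  simpa [p] using congrArg (Polynomial.degreeLTEquiv ℂ k) hp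

lemma eventually_evalCoeffs_ne_zero {a : Fin k → ℂ} (ha : a ≠ 0) (z₀ : ℂ) :
    ∀ᶠ z in 𝓝[≠] z₀, evalCoeffs a z ≠ 0 := by
  have han : AnalyticOnNhd ℂ (evalCoeffs a) Set.univ :=
    fun z _ => (differentiable_evalCoeffs a).analyticAt z
  refine ((han z₀ trivial).eventually_eq_zero_or_eventually_ne_zero).resolve_left fun h => ha ?_
  exact eq_zero_of_forall_evalCoeffs_eq_zero fun z =>
    han.eqOn_zero_of_preconnected_of_eventuallyEq_zero isPreconnected_univ trivial h trivial

end CoeffVectors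

-- For `x ≠ 0`, `valueForm b x = 0` iff `[x.1 : x.2] = b`.
noncomputable def valueForm {E : Type*} [AddCommGroup E] [Module ℂ E] (b : OnePoint ℂ) :
    E × E →ₗ[ℂ] E :=
  b.elim (LinearMap.snd ℂ E E) fun c => LinearMap.fst ℂ E E - c • LinearMap.snd ℂ E E

section ValueForm

variable {E : Type*} [AddCommGroup E] [Module ℂ E]

@[simp] lemma valueForm_infty (x : E × E) : valueForm ∞ x = x.2 := rfl

@[simp] lemma valueForm_coe (c : ℂ) (x : E × E) : valueForm c x = x.1 - c • x.2 := rfl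

lemma eq_of_valueForm_eq_zero {x : E × E} (hx : x ≠ 0) {b b' : OnePoint ℂ}
    (hb : valueForm b x = 0) (hb' : valueForm b' x = 0) : b = b' := by
  obtain ⟨p, q⟩ := x
  cases b with
  | infty => cases b' with
    | infty => rfl
    | coe d => simp_all
  | coe c => cases b' with
    | infty => simp_all
    | coe d =>
      simp only [valueForm_coe, sub_eq_zero] at hb hb'
      have : (c - d) • q = 0 := by rw [sub_smul, ← hb, ← hb', sub_self]
      rcases smul_eq_zero.1 this with h | rfl
      · rw [sub_eq_zero.1 h]
      · simp_all

end ValueForm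

lemma projPoint_eq_of_valueForm_eq_zero {x : ℂ × ℂ} (hx : x ≠ 0) {b : OnePoint ℂ}
    (hb : valueForm b x = 0) : projPoint x = b := by
  obtain ⟨p, q⟩ := x
  cases b with
  | infty => simp_all [projPoint]
  | coe c =>
    have hq : q ≠ 0 := by rintro rfl; simp_all
    simp_all [projPoint, sub_eq_zero]

lemma valueForm_evalCoeffPair {k : ℕ} (b : OnePoint ℂ) (u : (Fin k → ℂ) × (Fin k → ℂ)) (z : ℂ) :
    valueForm b (evalCoeffPair u z) = evalCoeffs (valueForm b u) z := by
  cases b <;> simp [evalCoeffPair, evalCoeffs, sub_mul, Finset.mul_sum, mul_assoc]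

section CoeffPairs

variable {k : ℕ}

lemma tendstoUniformlyOn_evalCoeffs {ι : Type*} {p : Filter ι} {a : ι → Fin k → ℂ}
    {a₀ : Fin k → ℂ} (ha : Tendsto a p (𝓝 a₀)) {K : Set ℂ} (hK : IsCompact K) :
    TendstoUniformlyOn (fun n => evalCoeffs (a n)) (evalCoeffs a₀) p K :=
  tendstoUniformlyOn_of_continuous_uncurry continuous_evalCoeffs hK ha

lemma tendstoUniformlyOn_evalCoeffPair {ι : Type*} {p : Filter ι}
    {u : ι → (Fin k → ℂ) × (Fin k → ℂ)} {v : (Fin k → ℂ) × (Fin k → ℂ)}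
    (hu : Tendsto u p (𝓝 v)) {K : Set ℂ} (hK : IsCompact K) :
    TendstoUniformlyOn (fun n => evalCoeffPair (u n)) (evalCoeffPair v) p K :=
  tendstoUniformlyOn_of_continuous_uncurry
    ((continuous_evalCoeffs.comp (continuous_fst.fst.prodMk continuous_snd)).prodMk
      (continuous_evalCoeffs.comp (continuous_fst.snd.prodMk continuous_snd))) hK hu

lemma continuous_evalCoeffPair (u : (Fin k → ℂ) × (Fin k → ℂ)) : Continuous (evalCoeffPair u) :=
  (differentiable_evalCoeffs u.1).continuous.prodMk (differentiable_evalCoeffs u.2).continuous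

lemma eventually_exists_projPoint_evalCoeffPair_eq {u : ℕ → (Fin k → ℂ) × (Fin k → ℂ)}
    {v : (Fin k → ℂ) × (Fin k → ℂ)} (huv : Tendsto u atTop (𝓝 v))
    (hu : ∀ n z, evalCoeffPair (u n) z ≠ 0) {z₀ : ℂ} (hv : evalCoeffPair v z₀ = 0)
    {b : OnePoint ℂ} (hb : valueForm b v ≠ 0) :
    ∀ U ∈ 𝓝 z₀, ∀ᶠ n in atTop, ∃ w ∈ U, projPoint (evalCoeffPair (u n) w) = b := by
  intro U hU
  obtain ⟨δ₀, hδ₀, hf⟩ := Metric.eventually_nhds_iff_ball.1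
    (eventually_nhdsWithin_iff.1 (eventually_evalCoeffs_ne_zero hb z₀))
  obtain ⟨δ₁, hδ₁, hU⟩ := nhds_basis_closedBall.mem_iff.1 hU
  set r := min (δ₀ / 2) δ₁
  have hr : 0 < r := lt_min (half_pos hδ₀) hδ₁
  have hF : Tendsto (fun n => valueForm b (u n)) atTop (𝓝 (valueForm b v)) :=
    ((valueForm (E := Fin k → ℂ) b).continuous_of_finiteDimensional.tendsto v).comp huv
  have hsphere : ∀ w ∈ sphere z₀ r, evalCoeffs (valueForm b v) w ≠ 0 := by
    intro w hw
    refine hf w ?_ ?_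
    · rw [mem_ball, mem_sphere.1 hw]; linarith [min_le_left (δ₀ / 2) δ₁]
    · rintro (rfl : w = z₀)
      simp [hr.ne] at hw
  have hf₀ : evalCoeffs (valueForm b v) z₀ = 0 := by rw [← valueForm_evalCoeffPair, hv, map_zero]
  filter_upwards [eventually_exists_eq_zero_of_tendstoUniformlyOn hr
    (fun n => (differentiable_evalCoeffs _).differentiableOn)
    (tendstoUniformlyOn_evalCoeffs hF (isCompact_closedBall z₀ r))
    (differentiable_evalCoeffs _).continuous.continuousOn hf₀ hsphere] with n ⟨w, hw, hw0⟩
  refine ⟨w, hU (closedBall_subset_closedBall (min_le_right _ _) hw), ?_⟩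
  exact projPoint_eq_of_valueForm_eq_zero (hu n w) (by rwa [valueForm_evalCoeffPair])

end CoeffPairs

lemma IsRationalDegLE.exists_evalCoeffPair {r : ℂ → OnePoint ℂ} {m : ℕ}
    (h : IsRationalDegLE r m) : ∃ u : (Fin (m + 1) → ℂ) × (Fin (m + 1) → ℂ),
      ‖u‖ = 1 ∧ (∀ z, evalCoeffPair u z ≠ 0) ∧ projPoint ∘ evalCoeffPair u = r := by
  obtain ⟨P, Q, -, hPQ, hP, hQ, hr⟩ := h
  set u₀ : (Fin (m + 1) → ℂ) × (Fin (m + 1) → ℂ) := (fun i => P.coeff i, fun i => Q.coeff i)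
  have heval : ∀ z, evalCoeffPair u₀ z = (P.eval z, Q.eval z) := fun z => by
    rw [Polynomial.eval_eq_evalCoeffs (Nat.lt_succ_of_le hP),
      Polynomial.eval_eq_evalCoeffs (Nat.lt_succ_of_le hQ)]
    rfl
  have hne : ∀ z, evalCoeffPair u₀ z ≠ 0 := fun z h0 => by
    obtain ⟨a, b, hab⟩ := hPQ
    rw [heval, Prod.mk_eq_zero] at h0
    simpa [h0.1, h0.2] using congrArg (Polynomial.eval z) hab
  have hu₀ : u₀ ≠ 0 := fun h0 => hne 0 (by simp [h0, evalCoeffPair, evalCoeffs])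
  have hc : (‖u₀‖⁻¹ : ℂ) ≠ 0 := by simpa using hu₀
  refine ⟨(‖u₀‖⁻¹ : ℂ) • u₀, norm_smul_inv_norm hu₀, fun z => ?_, funext fun z => ?_⟩
  · rw [evalCoeffPair_smul]
    exact smul_ne_zero hc (hne z)
  · rw [Function.comp_apply, evalCoeffPair_smul, projPoint_smul hc, heval, hr z]
    rfl

lemma evalCoeffPair_ne_zero_of_sharesPartially {k : ℕ} {D : Set ℂ} (hD : IsOpen D)
    {G : Set (ℂ → OnePoint ℂ)} (hG : ∀ g ∈ G, SphMeromorphicOn g D) (hGnormal : NormalOn G D)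
    {u : ℕ → (Fin k → ℂ) × (Fin k → ℂ)} {v : (Fin k → ℂ) × (Fin k → ℂ)}
    (huv : Tendsto u atTop (𝓝 v)) (hv : v ≠ 0) (hu : ∀ n z, evalCoeffPair (u n) z ≠ 0)
    {g : ℕ → ℂ → OnePoint ℂ} (hgG : ∀ n, g n ∈ G) {a₁ a₂ a₃ : OnePoint ℂ}
    (h12 : a₁ ≠ a₂) (h13 : a₁ ≠ a₃) (h23 : a₂ ≠ a₃)
    (hshare : ∀ n, SharesPartially (projPoint ∘ evalCoeffPair (u n)) (g n) D a₁ ∧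
      SharesPartially (projPoint ∘ evalCoeffPair (u n)) (g n) D a₂ ∧
      SharesPartially (projPoint ∘ evalCoeffPair (u n)) (g n) D a₃) :
    ∀ z ∈ D, evalCoeffPair v z ≠ 0 := by
  intro z₀ hz₀ hvz₀
  obtain ⟨ψ, hψ, g₀, hg₀⟩ := hGnormal g hgG
  have hlimit : ∀ b, valueForm b v ≠ 0 →
      (∀ n, SharesPartially (projPoint ∘ evalCoeffPair (u n)) (g n) D b) → g₀ z₀ = b := by
    intro b hb hshb
    refine hg₀.eq_of_frequently_eq hD (fun n => hG _ (hgG _)) hz₀ fun U hU => ?_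
    refine (eventually_exists_projPoint_evalCoeffPair_eq (huv.comp hψ.tendsto_atTop)
      (fun n => hu _) hvz₀ hb (U ∩ D) (inter_mem hU (hD.mem_nhds hz₀))).frequently.mono ?_
    rintro n ⟨w, ⟨hwU, hwD⟩, hw⟩
    exact ⟨w, hwU, hshb _ w hwD hw⟩
  have h₁ := fun (h : valueForm a₁ v ≠ 0) => hlimit a₁ h fun n => (hshare n).1
  have h₂ := fun (h : valueForm a₂ v ≠ 0) => hlimit a₂ h fun n => (hshare n).2.1
  have h₃ := fun (h : valueForm a₃ v ≠ 0) => hlimit a₃ h fun n => (hshare n).2.2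
  by_cases hv₁ : valueForm a₁ v = 0
  · exact h23 ((h₂ fun hv₂ => h12 (eq_of_valueForm_eq_zero hv hv₁ hv₂)).symm.trans
      (h₃ fun hv₃ => h13 (eq_of_valueForm_eq_zero hv hv₁ hv₃)))
  by_cases hv₂ : valueForm a₂ v = 0
  · exact h13 ((h₁ hv₁).symm.trans (h₃ fun hv₃ => h23 (eq_of_valueForm_eq_zero hv hv₂ hv₃)))
  · exact h12 ((h₁ hv₁).symm.trans (h₂ hv₂))

theorem normal_of_partial_sharing_three_values_rational_general
    (D : Set ℂ) (hDopen : IsOpen D) (m : ℕ)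
    (R G : Set (ℂ → OnePoint ℂ))
    (hR : ∀ r ∈ R, IsRationalDegLE r m)
    (hG : ∀ g ∈ G, SphMeromorphicOn g D)
    (a₁ a₂ a₃ : OnePoint ℂ) (h12 : a₁ ≠ a₂) (h13 : a₁ ≠ a₃) (h23 : a₂ ≠ a₃)
    (hGnormal : NormalOn G D)
    (hshare : ∀ r ∈ R, ∃ g ∈ G, SharesPartially r g D a₁ ∧
      SharesPartially r g D a₂ ∧ SharesPartially r g D a₃) :
    NormalOn R D := by
  intro s hs
  choose u hu1 hu0 hsu using fun n => (hR (s n) (hs n)).exists_evalCoeffPair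
  obtain rfl : s = fun n => projPoint ∘ evalCoeffPair (u n) := (funext hsu).symm
  choose g hgG hshare using fun n => hshare _ (hs n)
  obtain ⟨v, hv, φ, hφ, huv⟩ := (isCompact_sphere 0 1).tendsto_subseq fun n =>
    mem_sphere_zero_iff_norm.2 (hu1 n)
  have hv0 : v ≠ 0 := ne_zero_of_mem_unit_sphere ⟨v, hv⟩
  have hvD := evalCoeffPair_ne_zero_of_sharesPartially hDopen hG hGnormal huv hv0
    (fun n => hu0 (φ n)) (fun n => hgG (φ n)) h12 h13 h23 fun n => hshare (φ n)
  exact ⟨φ, hφ, projPoint ∘ evalCoeffPair v, sphConvLocUnifOn_projPoint_comp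
    (fun K _ hK => tendstoUniformlyOn_evalCoeffPair huv hK)
    (continuous_evalCoeffPair v).continuousOn hvD⟩

/-- **Theorem 1.5.** Let `𝓡` be a family of rational functions of degree at most `m`
(restricted to a domain `D`), let `𝓖` be a family of meromorphic functions on `D`, and let
`a₁, a₂, a₃ ∈ ℂ∞` be distinct. If `𝓖` is normal in `D` and each `R ∈ 𝓡` shares `a₁, a₂, a₃`
partially with some `g ∈ 𝓖`, then `𝓡` is normal in `D`. -/
theorem normal_of_partial_sharing_three_values_rational
    (D : Set ℂ) (hDopen : IsOpen D) (hDconn : IsConnected D) (m : ℕ)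
    (R G : Set (ℂ → OnePoint ℂ))
    (hR : ∀ r ∈ R, IsRationalDegLE r m)
    (hG : ∀ g ∈ G, SphMeromorphicOn g D)
    (a₁ a₂ a₃ : OnePoint ℂ) (h12 : a₁ ≠ a₂) (h13 : a₁ ≠ a₃) (h23 : a₂ ≠ a₃)
    (hGnormal : NormalOn G D)
    (hshare : ∀ r ∈ R, ∃ g ∈ G, SharesPartially r g D a₁ ∧
      SharesPartially r g D a₂ ∧ SharesPartially r g D a₃) :
    NormalOn R D :=
  normal_of_partial_sharing_three_values_rational_general D hDopen m R G hR hG a₁ a₂ a₃ h12 h13 h23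
    hGnormal hshare
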